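/- Let p be an odd prime and n a positive integer with p^n ≠ 3, let H be the incidence matrix of the unit graph G(Z_{p^n}) over F_2, and let C be the binary code generated by the rows of H. Then the dual code C^⊥ has length (p^n - 1)·φ(p^n)/2, dimension (p^n - 1)(φ(p^n) - 2)/2 over F_2, and minimum distance 3: every nonzero vector of C^⊥ has Hamming weight at least 3, and some vector of C^⊥ has Hamming weight exactly 3. -/

import Mathlib

/-- The unit graph of `ZMod m`: distinct vertices `x, y` are adjacent iff `x + y` is a unit. -/
def unitGraph (m : ℕ) : SimpleGraph (ZMod m) where
  Adj x y := x ≠ y ∧ IsUnit (x + y)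
  symm := by
    constructor
    intro x y h
    exact ⟨h.1.symm, by rw [add_comm]; exact h.2⟩
  loopless := by
    constructor
    intro x h
    exact h.1 rfl

open Classical in
/-- The linear code generated by the rows of the incidence matrix of `G` over `F`,
    viewed inside `F^E` where `E` is the edge set of `G`. -/
noncomputable def graphCode (F : Type*) [Field F] {V : Type*} (G : SimpleGraph V) :
    Submodule F (↥G.edgeSet → F) :=
  Submodule.span F (Set.range fun v : V => fun e : G.edgeSet => G.incMatrix F v ↑e)

noncomputable instance {V : Type*} [Finite V] (G : SimpleGraph V) : Fintype ↥G.edgeSet :=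
  Fintype.ofFinite _

instance (p n : ℕ) [Fact p.Prime] : NeZero (p ^ n) :=
  ⟨pow_ne_zero n (Fact.out : p.Prime).ne_zero⟩

instance (n : ℕ) : NeZero (2 ^ n) := ⟨pow_ne_zero n two_ne_zero⟩

/-- The dual code: all vectors orthogonal to every codeword of `C` under the standard
    dot product. -/
noncomputable def dualCode {F : Type*} [Field F] {ι : Type*} [Fintype ι]
    (C : Submodule F (ι → F)) : Submodule F (ι → F) where
  carrier := {w | ∀ c ∈ C, ∑ e, w e * c e = 0}
  add_mem' := by
    intro a b ha hb c hc
    simp only [Set.mem_setOf_eq] at *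
    have h : ∑ e, (a + b) e * c e = (∑ e, a e * c e) + ∑ e, b e * c e := by
      rw [← Finset.sum_add_distrib]
      simp [add_mul]
    rw [h, ha c hc, hb c hc, add_zero]
  zero_mem' := by
    intro c hc
    simp
  smul_mem' := by
    intro r w hw c hc
    simp only [Set.mem_setOf_eq] at *
    have h : ∑ e, (r • w) e * c e = r * ∑ e, w e * c e := by
      rw [Finset.mul_sum]
      simp [mul_assoc]
    rw [h, hw c hc, mul_zero]

lemma unitGraph_adj {m : ℕ} {x y : ZMod m} :
    (unitGraph m).Adj x y ↔ x ≠ y ∧ IsUnit (x + y) := Iff.rfl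

open Finset in
lemma card_filter_isUnit (m : ℕ) [NeZero m] [DecidablePred (fun z : ZMod m => IsUnit z)] :
    (Finset.univ.filter fun z : ZMod m => IsUnit z).card = m.totient := by
  classical
  rw [← ZMod.card_units_eq_totient m, ← Fintype.card_subtype]
  exact (Fintype.card_congr
    ⟨fun x => x.2.unit, fun u => ⟨(u : ZMod m), u.isUnit⟩,
      fun x => Subtype.ext x.2.unit_spec, fun u => Units.ext u.isUnit.unit_spec⟩)

open Finset in
lemma card_filter_isUnit_add (m : ℕ) [NeZero m] (a : ZMod m)
    [DecidablePred (fun z : ZMod m => IsUnit (a + z))] :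
    (Finset.univ.filter fun z : ZMod m => IsUnit (a + z)).card = m.totient := by
  classical
  rw [← @card_filter_isUnit m _ (Classical.decPred _)]
  apply Finset.card_bij' (fun z _ => a + z) (fun z _ => z - a)
  · intro z hz; simp only [mem_filter, mem_univ, true_and] at hz ⊢; exact hz
  · intro z hz; simp only [mem_filter, mem_univ, true_and] at hz ⊢; simpa using hz
  · intro z hz; ring
  · intro z hz; ring

open Finset in
lemma exists_common_neighbor (m : ℕ) [NeZero m] (h : m + 2 < 2 * m.totient) (a b : ZMod m) :
    ∃ z, (unitGraph m).Adj a z ∧ (unitGraph m).Adj z b := by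
  classical
  set Bad : Finset (ZMod m) :=
    ((Finset.univ.filter fun z : ZMod m => ¬IsUnit (a + z)) ∪
      (Finset.univ.filter fun z : ZMod m => ¬IsUnit (z + b))) ∪ {a, b} with hBad
  have hc1 : (Finset.univ.filter fun z : ZMod m => ¬IsUnit (a + z)).card = m - m.totient := by
    rw [Finset.filter_not, Finset.card_sdiff_of_subset (Finset.filter_subset _ _)]
    rw [card_filter_isUnit_add m a, Finset.card_univ, ZMod.card]
  have hc2 : (Finset.univ.filter fun z : ZMod m => ¬IsUnit (z + b)).card = m - m.totient := by
    have : (Finset.univ.filter fun z : ZMod m => ¬IsUnit (z + b)) =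
        (Finset.univ.filter fun z : ZMod m => ¬IsUnit (b + z)) := by
      apply Finset.filter_congr; intro z _; rw [add_comm]
    rw [this, Finset.filter_not, Finset.card_sdiff_of_subset (Finset.filter_subset _ _)]
    rw [card_filter_isUnit_add m b, Finset.card_univ, ZMod.card]
  have htot : m.totient ≤ m := Nat.totient_le m
  have hcard : Bad.card < Fintype.card (ZMod m) := by
    calc Bad.card ≤ _ + ({a, b} : Finset (ZMod m)).card := Finset.card_union_le _ _
    _ ≤ ((Finset.univ.filter fun z : ZMod m => ¬IsUnit (a + z)).card +
          (Finset.univ.filter fun z : ZMod m => ¬IsUnit (z + b)).card) + 2 := by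
        gcongr
        · exact Finset.card_union_le _ _
        · exact Finset.card_insert_le _ _ |>.trans (by simp)
    _ < Fintype.card (ZMod m) := by
        rw [hc1, hc2, ZMod.card]
        omega
  have hne : (Badᶜ : Finset (ZMod m)).Nonempty := by
    rw [← Finset.card_pos, Finset.card_compl]
    omega
  obtain ⟨z, hz⟩ := hne
  rw [Finset.mem_compl, hBad] at hz
  simp only [Finset.mem_union, Finset.mem_filter, Finset.mem_univ, true_and, not_or,
    Finset.mem_insert, Finset.mem_singleton, not_not] at hz
  exact ⟨z, ⟨fun h' => hz.2.1 h'.symm, hz.1.1⟩, ⟨fun h' => hz.2.2 h', hz.1.2⟩⟩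

open Finset in
lemma unitGraph_degree (m : ℕ) [NeZero m] (hm : Odd m) [DecidableRel (unitGraph m).Adj]
    (v : ZMod m) :
    (unitGraph m).degree v = if IsUnit v then m.totient - 1 else m.totient := by
  classical
  rw [← SimpleGraph.card_neighborFinset_eq_degree, SimpleGraph.neighborFinset_eq_filter]
  have h2 : IsUnit (2 : ZMod m) := by
    have : ((2 : ℕ) : ZMod m) = (2 : ZMod m) := by push_cast; ring
    rw [← this, ZMod.isUnit_iff_coprime]
    exact Nat.coprime_two_left.mpr hm
  have key : (Finset.univ.filter ((unitGraph m).Adj v)) =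
      (Finset.univ.filter fun y : ZMod m => IsUnit (v + y)).erase v := by
    ext y
    simp only [Finset.mem_erase, Finset.mem_filter, Finset.mem_univ, true_and, unitGraph_adj]
    constructor
    · rintro ⟨h1, h2⟩; exact ⟨h1.symm, h2⟩
    · rintro ⟨h1, h2⟩; exact ⟨h1.symm, h2⟩
  rw [key, Finset.card_erase_eq_ite]
  have hmem : v ∈ (Finset.univ.filter fun y : ZMod m => IsUnit (v + y)) ↔ IsUnit v := by
    simp only [Finset.mem_filter, Finset.mem_univ, true_and, ← two_mul]
    constructor
    · intro h; exact (IsUnit.mul_iff.mp h).2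
    · intro h; exact h2.mul h
  rw [card_filter_isUnit_add m v]
  by_cases hv : IsUnit v
  · rw [if_pos (hmem.mpr hv), if_pos hv]
  · rw [if_neg (fun h => hv (hmem.mp h)), if_neg hv]

open Finset in
lemma unitGraph_sum_degree (m : ℕ) [NeZero m] (hm : Odd m) [DecidableRel (unitGraph m).Adj] :
    ∑ v : ZMod m, (unitGraph m).degree v = (m - 1) * m.totient := by
  classical
  have htot1 : 1 ≤ m.totient := Nat.totient_pos.mpr (Nat.pos_of_ne_zero (NeZero.ne m))
  have htotm : m.totient ≤ m := Nat.totient_le m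
  have hm1 : 1 ≤ m := Nat.pos_of_ne_zero (NeZero.ne m)
  calc ∑ v : ZMod m, (unitGraph m).degree v
      = ∑ v : ZMod m, (if IsUnit v then m.totient - 1 else m.totient) := by
        apply Finset.sum_congr rfl; intro v _; exact unitGraph_degree m hm v
    _ = (Finset.univ.filter fun v : ZMod m => IsUnit v).card * (m.totient - 1) +
        (Finset.univ.filter fun v : ZMod m => ¬IsUnit v).card * m.totient := by
        rw [Finset.sum_ite, Finset.sum_const, Finset.sum_const, smul_eq_mul, smul_eq_mul]
    _ = m.totient * (m.totient - 1) + (m - m.totient) * m.totient := by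
        rw [card_filter_isUnit m, Finset.filter_not, Finset.card_sdiff_of_subset (Finset.filter_subset _ _),
          card_filter_isUnit m, Finset.card_univ, ZMod.card]
    _ = (m - 1) * m.totient := by
        zify [htot1, htotm, hm1]
        ring




open Classical in
lemma mem_dualCode_graphCode_iff {F : Type*} [Field F] {V : Type*} [Fintype V]
    (G : SimpleGraph V) (w : ↥G.edgeSet → F) :
    w ∈ dualCode (graphCode F G) ↔
      ∀ v : V, ∑ e : G.edgeSet, G.incMatrix F v ↑e * w e = 0 := by
  constructor
  · intro hw v
    have := hw (fun e : G.edgeSet => G.incMatrix F v ↑e)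
      (Submodule.subset_span ⟨v, rfl⟩)
    rw [← this]
    exact Finset.sum_congr rfl fun e _ => mul_comm _ _
  · intro hw c hc
    induction hc using Submodule.span_induction with
    | mem c hcmem =>
      obtain ⟨v, rfl⟩ := hcmem
      rw [← hw v]
      exact Finset.sum_congr rfl fun e _ => mul_comm _ _
    | zero => simp
    | add c₁ c₂ _ _ h₁ h₂ =>
      have : ∑ e, w e * (c₁ + c₂) e = (∑ e, w e * c₁ e) + ∑ e, w e * c₂ e := by
        rw [← Finset.sum_add_distrib]; simp [mul_add]
      rw [this, h₁, h₂, add_zero]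
    | smul r c _ h =>
      have : ∑ e, w e * (r • c) e = r * ∑ e, w e * c e := by
        rw [Finset.mul_sum]
        exact Finset.sum_congr rfl fun e _ => by simp; ring
      rw [this, h, mul_zero]

open Matrix in
lemma finrank_dualCode_graphCode {V : Type*} [Fintype V] [Nonempty V]
    (G : SimpleGraph V)
    (hcn : ∀ a b : V, ∃ z, G.Adj a z ∧ G.Adj z b) :
    Module.finrank (ZMod 2) ↥(dualCode (graphCode (ZMod 2) G)) + (Fintype.card V - 1)
      = Fintype.card ↥G.edgeSet := by
  classical
  set H : Matrix V ↥G.edgeSet (ZMod 2) :=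
    Matrix.of (fun v (e : ↥G.edgeSet) => G.incMatrix (ZMod 2) v ↑e) with hH
  have hdual : dualCode (graphCode (ZMod 2) G) = LinearMap.ker H.mulVecLin := by
    ext w
    rw [mem_dualCode_graphCode_iff, LinearMap.mem_ker]
    constructor
    · intro h
      funext v
      simpa [H, Matrix.mulVecLin_apply, Matrix.mulVec, dotProduct] using h v
    · intro h v
      simpa [H, Matrix.mulVecLin_apply, Matrix.mulVec, dotProduct] using congrFun h v
  have hker : LinearMap.ker (Hᵀ.mulVecLin) =
      Submodule.span (ZMod 2) {(fun _ => 1 : V → ZMod 2)} := by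
    apply le_antisymm
    · intro x hx
      rw [LinearMap.mem_ker] at hx
      have hadj : ∀ u v : V, G.Adj u v → x u = x v := by
        intro u v huv
        have he : s(u, v) ∈ G.edgeSet := G.mem_edgeSet.mpr huv
        have h0 : ∑ v' : V, x v' * G.incMatrix (ZMod 2) v' s(u, v) = 0 := by
          simpa [H, Matrix.mulVecLin_apply, Matrix.mulVec, Matrix.vecMul,
            dotProduct] using congrFun hx (⟨s(u, v), he⟩ : ↥G.edgeSet)
        have hstep : ∀ v' : V, x v' * G.incMatrix (ZMod 2) v' s(u, v) =
            (if v' ∈ ({u, v} : Finset V) then x v' else 0) := by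
          intro v'
          rw [SimpleGraph.incMatrix_apply']
          simp only [SimpleGraph.mk'_mem_incidenceSet_iff]
          by_cases hv' : v' = u ∨ v' = v
          · rw [if_pos ⟨huv, hv'⟩, if_pos (by simpa using hv'), mul_one]
          · rw [if_neg (fun hcon => hv' hcon.2), if_neg (by simpa using hv'), mul_zero]
        rw [Finset.sum_congr rfl (fun v' _ => hstep v'), Finset.sum_ite_mem,
          Finset.univ_inter, Finset.sum_pair (G.ne_of_adj huv)] at h0
        have := add_eq_zero_iff_eq_neg.mp h0
        rwa [CharTwo.neg_eq] at this
      have hconst : ∀ u v' : V, x u = x v' := fun u v' => by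
        obtain ⟨z, h1, h2⟩ := hcn u v'
        rw [hadj u z h1, hadj z v' h2]
      rw [Submodule.mem_span_singleton]
      refine ⟨x (Classical.arbitrary V), ?_⟩
      funext u
      simpa using hconst (Classical.arbitrary V) u
    · rw [Submodule.span_le, Set.singleton_subset_iff]
      rw [SetLike.mem_coe, LinearMap.mem_ker]
      funext e
      have hsum : ∑ v : V, G.incMatrix (ZMod 2) v ↑e = 2 :=
        SimpleGraph.sum_incMatrix_apply_of_mem_edgeSet (R := ZMod 2) (G := G) e.2
      have h2 : (2 : ZMod 2) = 0 := by decide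
      simpa [H, Matrix.mulVecLin_apply, Matrix.mulVec, Matrix.vecMul,
        dotProduct, h2] using hsum
  have hkrank : Module.finrank (ZMod 2) ↥(LinearMap.ker (Hᵀ.mulVecLin)) = 1 := by
    rw [hker]
    apply finrank_span_singleton
    intro hcon
    exact one_ne_zero (congrFun hcon (Classical.arbitrary V))
  have e1 := LinearMap.finrank_range_add_finrank_ker (Hᵀ.mulVecLin)
  have e2 := LinearMap.finrank_range_add_finrank_ker (H.mulVecLin)
  rw [Module.finrank_fintype_fun_eq_card] at e1 e2
  have hrt : Hᵀ.rank = H.rank := Matrix.rank_transpose H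
  rw [Matrix.rank, Matrix.rank] at hrt
  rw [hdual]
  rw [hkrank] at e1
  omega

lemma dual_min_dist {V : Type*} [Fintype V] (G : SimpleGraph V)
    (w : ↥G.edgeSet → ZMod 2) (hw : w ∈ dualCode (graphCode (ZMod 2) G)) (hw0 : w ≠ 0) :
    3 ≤ {e | w e ≠ 0}.ncard := by
  classical
  have hstep : ∀ (v : V) (e0 : ↥G.edgeSet), v ∈ (↑e0 : Sym2 V) → w e0 ≠ 0 →
      ∃ e1 : ↥G.edgeSet, e1 ≠ e0 ∧ w e1 ≠ 0 ∧ v ∈ (↑e1 : Sym2 V) := by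
    intro v e0 hv h0
    by_contra hcon
    push_neg at hcon
    have hsum := (mem_dualCode_graphCode_iff G w).mp hw v
    have heq : ∑ e : ↥G.edgeSet, G.incMatrix (ZMod 2) v ↑e * w e = w e0 := by
      rw [Finset.sum_eq_single e0]
      · rw [SimpleGraph.incMatrix_of_mem_incidenceSet _ ⟨e0.2, hv⟩, one_mul]
      · intro e _ hne
        by_cases hwe : w e = 0
        · rw [hwe, mul_zero]
        · rw [SimpleGraph.incMatrix_of_notMem_incidenceSet, zero_mul]
          exact fun hmem => hcon e hne hwe hmem.2
      · intro h; exact absurd (Finset.mem_univ e0) h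
    rw [heq] at hsum
    exact h0 hsum
  obtain ⟨e0, h0⟩ := Function.ne_iff.mp hw0
  have h0 : w e0 ≠ 0 := by simpa using h0
  obtain ⟨u, v, huv⟩ : ∃ u v, (↑e0 : Sym2 V) = s(u, v) :=
    @Sym2.ind V (fun s => ∃ u v, s = s(u, v)) (fun u v => ⟨u, v, rfl⟩) ↑e0
  have hune : u ≠ v := by
    have he := e0.2
    rw [huv] at he
    exact (G.mem_edgeSet.mp he).ne
  have hu : u ∈ (↑e0 : Sym2 V) := by rw [huv]; exact Sym2.mem_mk_left u v
  have hv : v ∈ (↑e0 : Sym2 V) := by rw [huv]; exact Sym2.mem_mk_right u v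
  obtain ⟨e1, he1ne, he1w, he1u⟩ := hstep u e0 hu h0
  obtain ⟨e2, he2ne, he2w, he2v⟩ := hstep v e0 hv h0
  have he12 : e1 ≠ e2 := by
    intro h
    subst h
    have : (↑e1 : Sym2 V) = s(u, v) := (Sym2.mem_and_mem_iff hune).mp ⟨he1u, he2v⟩
    exact he1ne (Subtype.ext (this.trans huv.symm))
  have hsub : ({e1, e2, e0} : Set ↥G.edgeSet) ⊆ {e | w e ≠ 0} := by
    intro e he
    simp only [Set.mem_insert_iff, Set.mem_singleton_iff] at he
    rcases he with rfl | rfl | rfl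
    · exact he1w
    · exact he2w
    · exact h0
  have h3 : ({e1, e2, e0} : Set ↥G.edgeSet).ncard = 3 := by
    rw [Set.ncard_insert_of_notMem (by simp [he12, he1ne]),
      Set.ncard_insert_of_notMem (by simp [he2ne]), Set.ncard_singleton]
  exact h3 ▸ Set.ncard_le_ncard hsub (Set.toFinite _)

lemma dual_weight_three {V : Type*} [Fintype V] (G : SimpleGraph V) (a b c : V)
    (hab : G.Adj a b) (hbc : G.Adj b c) (hac : G.Adj a c) :
    ∃ w ∈ dualCode (graphCode (ZMod 2) G), w ≠ 0 ∧ {e | w e ≠ 0}.ncard = 3 := by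
  classical
  set E1 : ↥G.edgeSet := ⟨s(a, b), G.mem_edgeSet.mpr hab⟩ with hE1
  set E2 : ↥G.edgeSet := ⟨s(b, c), G.mem_edgeSet.mpr hbc⟩ with hE2
  set E3 : ↥G.edgeSet := ⟨s(a, c), G.mem_edgeSet.mpr hac⟩ with hE3
  have hne12 : E1 ≠ E2 := by
    intro h
    rw [hE1, hE2, Subtype.mk.injEq, Sym2.eq_iff] at h
    rcases h with ⟨h, -⟩ | ⟨h, -⟩
    · exact hab.ne h
    · exact hac.ne h
  have hne13 : E1 ≠ E3 := by
    intro h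
    rw [hE1, hE3, Subtype.mk.injEq, Sym2.eq_iff] at h
    rcases h with ⟨-, h⟩ | ⟨h, -⟩
    · exact hbc.ne h
    · exact hac.ne h
  have hne23 : E2 ≠ E3 := by
    intro h
    rw [hE2, hE3, Subtype.mk.injEq, Sym2.eq_iff] at h
    rcases h with ⟨h, -⟩ | ⟨h, -⟩
    · exact hab.ne h.symm
    · exact hbc.ne h
  set w : ↥G.edgeSet → ZMod 2 :=
    (fun e => if e = E1 ∨ e = E2 ∨ e = E3 then 1 else 0) with hwdef
  refine ⟨w, ?_, ?_, ?_⟩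
  · rw [mem_dualCode_graphCode_iff]
    intro v
    have hterm : ∀ e : ↥G.edgeSet, G.incMatrix (ZMod 2) v ↑e * w e =
        (if e ∈ ({E1, E2, E3} : Finset ↥G.edgeSet) then G.incMatrix (ZMod 2) v ↑e else 0) := by
      intro e
      rw [hwdef]
      simp only [Finset.mem_insert, Finset.mem_singleton]
      by_cases h : e = E1 ∨ e = E2 ∨ e = E3
      · rw [if_pos h, if_pos h, mul_one]
      · rw [if_neg h, if_neg h, mul_zero]
    rw [Finset.sum_congr rfl fun e _ => hterm e, Finset.sum_ite_mem, Finset.univ_inter,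
      Finset.sum_insert (by simp [hne12, hne13]), Finset.sum_insert (by simp [hne23]),
      Finset.sum_singleton]
    have hM : ∀ x y : V, G.Adj x y →
        G.incMatrix (ZMod 2) v s(x, y) = if v = x ∨ v = y then 1 else 0 := by
      intro x y hxy
      rw [SimpleGraph.incMatrix_apply']
      simp only [SimpleGraph.mk'_mem_incidenceSet_iff]
      by_cases h : v = x ∨ v = y
      · rw [if_pos ⟨hxy, h⟩, if_pos h]
      · rw [if_neg (fun hc => h hc.2), if_neg h]
    show G.incMatrix (ZMod 2) v ↑E1 + (G.incMatrix (ZMod 2) v ↑E2 + G.incMatrix (ZMod 2) v ↑E3) = 0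
    rw [hE1, hE2, hE3]
    rw [hM a b hab, hM b c hbc, hM a c hac]
    by_cases hva : v = a
    · subst hva
      rw [if_pos (Or.inl rfl), if_neg (by simp [hab.ne, hac.ne]), if_pos (Or.inl rfl)]
      decide
    · by_cases hvb : v = b
      · subst hvb
        rw [if_pos (Or.inr rfl), if_pos (Or.inl rfl), if_neg (by simp [hab.ne', hbc.ne])]
        decide
      · by_cases hvc : v = c
        · subst hvc
          rw [if_neg (by simp [hac.ne', hbc.ne']), if_pos (Or.inr rfl), if_pos (Or.inr rfl)]
          decide
        · rw [if_neg (by simp [hva, hvb]), if_neg (by simp [hvb, hvc]),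
            if_neg (by simp [hva, hvc])]
          decide
  · intro h
    have := congrFun h E1
    rw [hwdef] at this
    simp at this
  · have hset : {e | w e ≠ 0} = {E1, E2, E3} := by
      ext e
      rw [hwdef]
      simp only [Set.mem_setOf_eq, Set.mem_insert_iff, Set.mem_singleton_iff]
      by_cases h : e = E1 ∨ e = E2 ∨ e = E3
      · simp [h]
      · simp [h]
    rw [hset, Set.ncard_insert_of_notMem (by simp [hne12, hne13]),
      Set.ncard_insert_of_notMem (by simp [hne23]), Set.ncard_singleton]

theorem unitGraph_primePow_dualCode (p n : ℕ) [Fact p.Prime] (hodd : Odd p) (hn : 0 < n)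
    (h3 : p ^ n ≠ 3) :
    Nat.card ↥(unitGraph (p ^ n)).edgeSet = (p ^ n - 1) * Nat.totient (p ^ n) / 2 ∧
    Module.finrank (ZMod 2) ↥(dualCode (graphCode (ZMod 2) (unitGraph (p ^ n)))) =
      (p ^ n - 1) * (Nat.totient (p ^ n) - 2) / 2 ∧
    (∀ w ∈ dualCode (graphCode (ZMod 2) (unitGraph (p ^ n))), w ≠ 0 →
      3 ≤ {e | w e ≠ 0}.ncard) ∧
    (∃ w ∈ dualCode (graphCode (ZMod 2) (unitGraph (p ^ n))),
      w ≠ 0 ∧ {e | w e ≠ 0}.ncard = 3) := by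
  classical
  have hp : p.Prime := Fact.out
  have hp2 : p ≠ 2 := by rintro rfl; exact (by decide : ¬Odd 2) hodd
  have hp3 : 3 ≤ p := by have := hp.two_le; omega
  have hodd' : p % 2 = 1 := Nat.odd_iff.mp hodd
  have hqodd : Odd (p ^ n) := hodd.pow
  have hpq : p ≤ p ^ n := Nat.le_self_pow hn.ne' p
  have hq1 : 1 < p ^ n := by omega
  have hn2 : p = 3 → 2 ≤ n := by
    intro hp3'
    rcases Nat.lt_or_ge n 2 with h | h
    · interval_cases n
      exact absurd (by rw [pow_one]; exact hp3' : p ^ 1 = 3) h3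
    · exact h
  have hq5 : 5 ≤ p ^ n := by
    by_cases hp3' : p = 3
    · have h9 : 9 ≤ 3 ^ n := by
        calc 9 = 3 ^ 2 := by norm_num
        _ ≤ 3 ^ n := Nat.pow_le_pow_right (by norm_num) (hn2 hp3')
      have hq9 : p ^ n = 3 ^ n := by rw [hp3']
      omega
    · omega
  -- counting hypothesis
  have hcount : p ^ n + 2 < 2 * (p ^ n).totient := by
    have htot : (p ^ n).totient = p ^ (n - 1) * (p - 1) :=
      Nat.totient_prime_pow hp hn
    have hqe : p ^ n = p ^ (n - 1) * p := by
      rw [← pow_succ, Nat.sub_add_cancel hn]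
    have hkey : 2 < p ^ (n - 1) * (p - 2) := by
      by_cases hp3' : p = 3
      · have h3t : 3 ≤ p ^ (n - 1) := by
          calc 3 = 3 ^ 1 := by norm_num
          _ ≤ 3 ^ (n - 1) := Nat.pow_le_pow_right (by norm_num) (by have := hn2 hp3'; omega)
          _ = p ^ (n - 1) := by rw [hp3']
        calc 2 < 3 := by norm_num
        _ ≤ p ^ (n - 1) := h3t
        _ ≤ p ^ (n - 1) * (p - 2) := Nat.le_mul_of_pos_right _ (by omega)
      · have hp5 : 5 ≤ p := by omega
        calc 2 < p - 2 := by omega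
        _ ≤ p ^ (n - 1) * (p - 2) :=
            Nat.le_mul_of_pos_left _ (pow_pos (by omega) _)
    rw [htot, hqe]
    generalize p ^ (n - 1) = t at hkey ⊢
    zify [show 1 ≤ p by omega, show 2 ≤ p by omega] at hkey ⊢
    nlinarith [hkey]
  -- edge count
  letI : DecidableRel (unitGraph (p ^ n)).Adj := Classical.decRel _
  have htwice := SimpleGraph.sum_degrees_eq_twice_card_edges (unitGraph (p ^ n))
  have hsum := unitGraph_sum_degree (p ^ n) hqodd
  have hE2 : 2 * Nat.card ↥(unitGraph (p ^ n)).edgeSet = ((p ^ n) - 1) * (p ^ n).totient := by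
    have h := htwice.symm.trans hsum
    rwa [@SimpleGraph.edgeFinset_card _ (unitGraph (p ^ n)) ((unitGraph (p ^ n)).fintypeEdgeSet),
      ← @Nat.card_eq_fintype_card _ ((unitGraph (p ^ n)).fintypeEdgeSet)] at h
  have hφ2 : 2 ≤ (p ^ n).totient := by omega
  refine ⟨?_, ?_, ?_, ?_⟩
  · rw [← hE2, Nat.mul_div_cancel_left _ (by norm_num : (0:ℕ) < 2)]
  · have hcn := exists_common_neighbor (p ^ n) hcount
    have hdim := finrank_dualCode_graphCode (unitGraph (p ^ n)) hcn
    rw [ZMod.card (p ^ n), ← Nat.card_eq_fintype_card] at hdim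
    have hBA : ((p ^ n) - 1) * ((p ^ n).totient - 2) + ((p ^ n) - 1) * 2 = ((p ^ n) - 1) * (p ^ n).totient := by
      rw [← Nat.mul_add, Nat.sub_add_cancel hφ2]
    generalize hD : Module.finrank (ZMod 2) ↥(dualCode (graphCode (ZMod 2) (unitGraph (p ^ n)))) = D
      at hdim ⊢
    generalize hC : Nat.card ↥(unitGraph (p ^ n)).edgeSet = C at hdim hE2
    generalize hX : ((p ^ n) - 1) * ((p ^ n).totient - 2) = X at hBA ⊢
    generalize hY : ((p ^ n) - 1) * (p ^ n).totient = Y at hBA hE2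
    omega
  · exact fun w hw hw0 => dual_min_dist _ w hw hw0
  · -- triangle 0, 1, k
    set k : ℕ := if p = 3 then 4 else 2 with hk
    have hkq : k < (p ^ n) ∧ 2 ≤ k ∧ k ≤ 4 := by
      by_cases hp3' : p = 3
      · have h9 : 9 ≤ 3 ^ n := by
          calc 9 = 3 ^ 2 := by norm_num
          _ ≤ 3 ^ n := Nat.pow_le_pow_right (by norm_num) (hn2 hp3')
        have hq9 : p ^ n = 3 ^ n := by rw [hp3']
        rw [hk, if_pos hp3']
        omega
      · rw [hk, if_neg hp3']
        omega
    have hinj : ∀ a b : ℕ, a < (p ^ n) → b < (p ^ n) → (a : ZMod (p ^ n)) = (b : ZMod (p ^ n)) → a = b := by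
      intro a b ha hb hab
      have := congrArg ZMod.val hab
      rwa [ZMod.val_cast_of_lt ha, ZMod.val_cast_of_lt hb] at this
    have hcop : ∀ j : ℕ, ¬p ∣ j → Nat.Coprime j (p ^ n) := by
      intro j hj
      exact Nat.Coprime.pow_right n (Nat.coprime_comm.mp (hp.coprime_iff_not_dvd.mpr hj))
    have hpk : ¬p ∣ k ∧ ¬p ∣ (1 + k) := by
      by_cases hp3' : p = 3
      · rw [hk, if_pos hp3', hp3']
        exact ⟨by decide, by decide⟩
      · rw [hk, if_neg hp3']
        constructor
        · intro h
          exact hp2 ((Nat.prime_dvd_prime_iff_eq hp Nat.prime_two).mp h)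
        · intro h
          exact hp3' ((Nat.prime_dvd_prime_iff_eq hp Nat.prime_three).mp h)
    haveI : Fact (1 < (p ^ n)) := ⟨hq1⟩
    have hadj01 : (unitGraph (p ^ n)).Adj 0 1 := by
      rw [unitGraph_adj]
      exact ⟨zero_ne_one, by simpa using isUnit_one⟩
    have hadj1k : (unitGraph (p ^ n)).Adj 1 (k : ZMod (p ^ n)) := by
      rw [unitGraph_adj]
      constructor
      · intro h
        have h1 : ((1 : ℕ) : ZMod (p ^ n)) = (k : ZMod (p ^ n)) := by simpa using h
        have := hinj 1 k (by omega) hkq.1 h1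
        omega
      · have h1k : (1 : ZMod (p ^ n)) + (k : ZMod (p ^ n)) = ((1 + k : ℕ) : ZMod (p ^ n)) := by push_cast; ring
        rw [h1k, ZMod.isUnit_iff_coprime]
        exact hcop (1 + k) hpk.2
    have hadj0k : (unitGraph (p ^ n)).Adj 0 (k : ZMod (p ^ n)) := by
      rw [unitGraph_adj]
      constructor
      · intro h
        have h1 : ((0 : ℕ) : ZMod (p ^ n)) = (k : ZMod (p ^ n)) := by simpa using h
        have := hinj 0 k (by omega) hkq.1 h1
        omega
      · rw [zero_add, ZMod.isUnit_iff_coprime]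
        exact hcop k hpk.1
    exact dual_weight_three (unitGraph (p ^ n)) 0 1 (k : ZMod (p ^ n)) hadj01 hadj1k hadj0k
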